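/- arXiv:1209.3927 — 2 statements merged into one kernel-verified Lean document; each statement's English description precedes it below -/
import Mathlib

section
/- If u is a prefix of v, then ψ(u) is both a prefix and a suffix of ψ(v). -/
def palClosure (w : List Bool) : List Bool :=
  let k := Nat.find (p := fun k => (w.drop k).reverse = w.drop k)
    ⟨w.length, by simp⟩
  w.take k ++ w.drop k ++ (w.take k).reverse

def psi (v : List Bool) : List Bool := v.foldl (fun w x => palClosure (w ++ [x])) []

def E (v : List Bool) : List Bool := v.map (!·)

def mu (x : Bool) (w : List Bool) : List Bool := w.flatMap (fun y => if y = x then [x] else [x, y])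

def muW : List Bool → List Bool → List Bool
  | [], w => w
  | x :: v, w => mu x (muW v w)

def vN (n : ℕ) : List Bool := (List.range n).map (fun i => decide (i % 2 = 1))

def fibF : ℕ → ℕ
  | 0 => 1
  | 1 => 1
  | n + 2 => fibF (n + 1) + fibF n

def HasPeriod (w : List Bool) (p : ℕ) : Prop :=
  0 < p ∧ ∀ i j (hi : i < w.length) (hj : j < w.length),
    i % p = j % p → w.get ⟨i, hi⟩ = w.get ⟨j, hj⟩

noncomputable def minPeriod (w : List Bool) : ℕ := sInf {p | HasPeriod w p}

def dOp : List Bool → List Bool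
  | x :: y :: u => y :: x :: u
  | w => w

def cOp (v : List Bool) : List Bool := (dOp v.reverse).reverse

def contAux : List ℕ → ℕ
  | [] => 1
  | [a] => a
  | a :: b :: t => a * contAux (b :: t) + contAux t

/-!
Each step `ψ(v) ↦ (ψ(v) x)⁺` extends the word, so `ψ` is monotone for the prefix order; since
every `ψ(v)` is a palindrome, reversing a prefix relation between two of them gives a suffix
relation.
-/

lemma palClosure_reverse (w : List Bool) : (palClosure w).reverse = palClosure w := by
  have hk := Nat.find_spec (p := fun k => (w.drop k).reverse = w.drop k) ⟨w.length, by simp⟩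
  simp only [palClosure, List.reverse_append, List.reverse_reverse, hk, List.append_assoc]

lemma prefix_palClosure (w : List Bool) : w <+: palClosure w := by
  simp only [palClosure, List.take_append_drop]
  exact List.prefix_append _ _

lemma psi_append_singleton (v : List Bool) (x : Bool) :
    psi (v ++ [x]) = palClosure (psi v ++ [x]) := by
  simp only [psi, List.foldl_append, List.foldl_cons, List.foldl_nil]

lemma psi_reverse (v : List Bool) : (psi v).reverse = psi v := by
  induction v using List.reverseRecOn with
  | nil => rfl
  | append_singleton v x _ => rw [psi_append_singleton, palClosure_reverse]

lemma psi_prefix_psi_append (u t : List Bool) : psi u <+: psi (u ++ t) := by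
  induction t using List.reverseRecOn with
  | nil => simp
  | append_singleton t x ih =>
    rw [← List.append_assoc, psi_append_singleton]
    exact ih.trans (((psi (u ++ t)).prefix_append [x]).trans (prefix_palClosure _))

theorem List.IsPrefix.psi {u v : List Bool} (h : u <+: v) : psi u <+: psi v := by
  obtain ⟨t, rfl⟩ := h
  exact psi_prefix_psi_append u t

theorem stmt2 (u v : List Bool) (h : u <+: v) :
    psi u <+: psi v ∧ psi u <:+ psi v := by
  refine ⟨h.psi, ?_⟩
  rw [← psi_reverse u, ← psi_reverse v]
  exact List.reverse_suffix.mpr h.psi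
end

section
/- If n ≥ 2, z is the letter a when n is even and b when n is odd, and z̄ = E(z), then ψ(v^(n+1)) = ψ(v^(n−1)) z̄ z ψ(v^(n)). -/
def xx (n : ℕ) : Bool := decide (n % 2 = 1)

def S : ℕ → List Bool
  | 0 => []
  | 1 => [false]
  | n+2 => S n ++ [!xx (n+1), xx (n+1)] ++ S (n+1)

lemma xx_succ (n : ℕ) : xx (n+1) = !xx n := by
  simp only [xx]
  rcases Nat.even_or_odd n with h | h
  · obtain ⟨k, rfl⟩ := h
    have h1 : (k + k) % 2 = 0 := by omega
    have h2 : (k + k + 1) % 2 = 1 := by omega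
    simp [h1, h2]
  · obtain ⟨k, rfl⟩ := h
    have h1 : (2*k+1) % 2 = 1 := by omega
    have h2 : (2*k+1+1) % 2 = 0 := by omega
    simp [h1, h2]

lemma S_def (n : ℕ) : S (n+2) = S n ++ [!xx (n+1), xx (n+1)] ++ S (n+1) := rfl

lemma S_B (n : ℕ) : S (n+2) = S (n+1) ++ [xx (n+1), !xx (n+1)] ++ S n := by
  induction n with
  | zero => decide
  | succ n ih =>
    have hx : xx (n+2) = !xx (n+1) := xx_succ (n+1)
    calc S (n+3) = S (n+1) ++ [!xx (n+2), xx (n+2)] ++ S (n+2) := rfl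
    _ = S (n+1) ++ [!xx (n+2), xx (n+2)] ++ (S n ++ [!xx (n+1), xx (n+1)] ++ S (n+1)) := by
        rw [← S_def]; rfl
    _ = (S (n+1) ++ [xx (n+1), !xx (n+1)] ++ S n) ++ [xx (n+2), !xx (n+2)] ++ S (n+1) := by
        rw [hx]; simp
    _ = S (n+2) ++ [xx (n+2), !xx (n+2)] ++ S (n+1) := by rw [← ih]

lemma S_pal (n : ℕ) : (S n).reverse = S n := by
  induction n using Nat.twoStepInduction with
  | more n ih1 ih2 =>
    rw [S_def]
    simp only [List.reverse_append, ih1, ih2]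
    rw [show S n ++ [!xx (n+1), xx (n+1)] ++ S (n+1) = S (n+2) from rfl, S_B]
    simp
  | _ => decide

lemma S_len (n : ℕ) : (S (n+2)).length = (S n).length + 2 + (S (n+1)).length := by
  rw [S_def]; simp; omega

lemma S_len_lt (n : ℕ) : (S n).length < (S (n+1)).length := by
  cases n with
  | zero => decide
  | succ n => rw [S_len]; omega

lemma S_prefix_succ (n : ℕ) : S n <+: S (n+1) := by
  cases n with
  | zero => exact List.nil_prefix
  | succ n => rw [S_B]; simp [List.prefix_append]

lemma S_prefix (j m : ℕ) (h : j ≤ m) : S j <+: S m := by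
  induction m with
  | zero => have hj : j = 0 := Nat.le_zero.mp h; subst hj; rfl
  | succ m ih =>
    rcases Nat.lt_or_ge j (m+1) with h' | h'
    · exact (ih (by omega)).trans (S_prefix_succ m)
    · have : j = m + 1 := by omega
      subst this; rfl

lemma S_letter (n : ℕ) : (S (n+1))[(S n).length]? = some (xx n) := by
  cases n with
  | zero => decide
  | succ n =>
    rw [S_B]
    rw [List.append_assoc, List.getElem?_append]
    simp

lemma pref_get {w' w : List Bool} (h : w' <+: w) {i : ℕ} (hi : i < w'.length) :
    w'[i]? = w[i]? := by
  obtain ⟨t, rfl⟩ := h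
  rw [List.getElem?_append, if_pos hi]

def Per (w : List Bool) (e : ℕ) : Prop := ∀ i, i + e < w.length → w[i]? = w[i + e]?

lemma per_of_prefix {w' w : List Bool} {e : ℕ} (h : w' <+: w) (hp : Per w e) : Per w' e := by
  intro i hi
  have hlen : w'.length ≤ w.length := h.length_le
  rw [pref_get h (by omega), pref_get h (by omega)]
  exact hp i (by omega)

lemma nested_pal {q p : List Bool} (hq : q <+: p) (hqp : q.reverse = q) (hpp : p.reverse = p) :
    Per p (p.length - q.length) := by
  intro i hi
  have hql : q.length ≤ p.length := hq.length_le
  -- p[i] = p[len-1-i] = q[len-1-i]... chain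
  have h2 : p[i + (p.length - q.length)]? = p[p.length - 1 - (i + (p.length - q.length))]? := by
    have := List.getElem?_reverse (l := p) (i := i + (p.length - q.length)) (by omega)
    rwa [hpp] at this
  -- both rhs indices are < q.length resp., relate through q's palindromicity
  have e1 : p[p.length - 1 - (i + (p.length - q.length))]? = q[p.length - 1 - (i + (p.length - q.length))]? :=
    (pref_get hq (show p.length - 1 - (i + (p.length - q.length)) < q.length by omega)).symm
  have e2 : q[p.length - 1 - (i + (p.length - q.length))]? = q[q.length - 1 - (p.length - 1 - (i + (p.length - q.length)))]? := by
    have := List.getElem?_reverse (l := q) (i := p.length - 1 - (i + (p.length - q.length))) (by omega)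
    rwa [hqp] at this
  have harith : q.length - 1 - (p.length - 1 - (i + (p.length - q.length))) = i := by omega
  rw [harith] at e2
  have e3 : q[i]? = p[i]? := pref_get hq (show i < q.length by omega)
  rw [h2, e1, e2, e3]

lemma two_per {w : List Bool} {e P : ℕ} (h1 : Per w e) (h2 : Per w P) (hlt : e < P) :
    Per (w.take (w.length - e)) (P - e) := by
  intro i hi
  simp only [List.length_take] at hi
  have hi' : i + (P - e) < w.length - e := by omega
  rw [List.getElem?_take, List.getElem?_take, if_pos (by omega), if_pos (by omega)]
  have hP : i + P < w.length := by omega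
  have a1 : w[i]? = w[i + P]? := h2 i hP
  have a2 : w[i + (P - e)]? = w[i + (P - e) + e]? := h1 _ (by omega)
  rw [show i + (P - e) + e = i + P by omega] at a2
  rw [a1, a2]

lemma take_of_prefix {w' w : List Bool} (h : w' <+: w) {k : ℕ} (hk : w'.length ≤ k) :
    w' <+: w.take k := by
  obtain ⟨t, rfl⟩ := h
  rw [List.take_append]
  rw [List.take_of_length_le (by omega)]
  exact List.prefix_append _ _

lemma S_take (j m : ℕ) (h : j ≤ m) : (S m).take (S j).length = S j :=
  ((List.prefix_iff_eq_take.mp (S_prefix j m h)).symm)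

lemma S_no_small_per : ∀ n, ∀ e, 0 < e → e < (S n).length + 2 → ¬ Per (S (n+2)) e := by
  intro n
  induction n using Nat.twoStepInduction with
  | zero =>
    intro e he1 he2 h
    have he : e = 1 := by simp [S] at he2; omega
    subst he
    have := h 0 (by decide)
    simp [S, xx] at this
  | one =>
    intro e he1 he2 h
    have hl : (S 1).length = 1 := by decide
    rw [hl] at he2
    interval_cases e
    · have := h 0 (by decide)
      simp [S, xx] at this
    · have := h 1 (by decide)
      simp [S, xx] at this
  | more n ih1 ih2 =>
    intro e he1 he2 h
    -- word W = S (n+4), P = (S (n+2)).length + 2 = L(n+4) - L(n+3)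
    have hlen4 : (S (n+4)).length = (S (n+2)).length + 2 + (S (n+3)).length := S_len (n+2)
    have hlen3 : (S (n+3)).length = (S (n+1)).length + 2 + (S (n+2)).length := S_len (n+1)
    have hlen2 : (S (n+2)).length = (S n).length + 2 + (S (n+1)).length := S_len n
    have hP : Per (S (n+4)) ((S (n+2)).length + 2) := by
      have := nested_pal (S_prefix (n+3) (n+4) (by omega)) (S_pal (n+3)) (S_pal (n+4))
      rwa [show (S (n+4)).length - (S (n+3)).length = (S (n+2)).length + 2 by omega] at this
    have helt : e < (S (n+2)).length + 2 := by omega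
    have htp := two_per h hP helt
    have hpre : S (n+3) <+: (S (n+4)).take ((S (n+4)).length - e) := by
      apply take_of_prefix (S_prefix (n+3) (n+4) (by omega))
      omega
    have hper3 : Per (S (n+3)) ((S (n+2)).length + 2 - e) := per_of_prefix hpre htp
    have hper3e : Per (S (n+3)) e := per_of_prefix (S_prefix (n+3) (n+4) (by omega)) h
    rcases Nat.lt_or_ge e ((S (n+1)).length + 2) with hc | hc
    · exact ih2 e he1 hc hper3e
    · apply ih2 ((S (n+2)).length + 2 - e) (by omega) _ hper3
      have : (S n).length < (S (n+1)).length := S_len_lt n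
      omega

lemma S_len_lt2 (n : ℕ) : (S (n+1)).length < 2 * (S n).length + 2 := by
  cases n with
  | zero => decide
  | succ n =>
    have h1 := S_len n
    have h2 := S_len_lt n
    show (S (n+2)).length < 2 * (S (n+1)).length + 2
    omega

lemma no_mid_pal (n : ℕ) (p : List Bool) (hp : p <+: S (n+3)) (hpal : p.reverse = p)
    (hlen : (S (n+2)).length < p.length) : p = S (n+3) := by
  have hle : p.length ≤ (S (n+3)).length := hp.length_le
  have hlen3 : (S (n+3)).length = (S (n+1)).length + 2 + (S (n+2)).length := S_len (n+1)
  have hlen2 : (S (n+2)).length = (S n).length + 2 + (S (n+1)).length := S_len n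
  rcases Nat.eq_or_lt_of_le hle with heq | hlt
  · exact List.IsPrefix.eq_of_length hp heq
  · exfalso
    set e := p.length - (S (n+2)).length with he
    have he1 : 0 < e := by omega
    have he2 : e < (S (n+1)).length + 2 := by omega
    have hPw : Per (S (n+3)) ((S (n+1)).length + 2) := by
      have := nested_pal (S_prefix (n+2) (n+3) (by omega)) (S_pal (n+2)) (S_pal (n+3))
      rwa [show (S (n+3)).length - (S (n+2)).length = (S (n+1)).length + 2 by omega] at this
    have hPp : Per p ((S (n+1)).length + 2) := per_of_prefix hp hPw
    have hSp : S (n+2) <+: p :=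
      List.prefix_of_prefix_length_le (S_prefix (n+2) (n+3) (by omega)) hp (by omega)
    have hpe : Per p e := by
      have := nested_pal hSp (S_pal (n+2)) hpal
      rwa [← he] at this
    have htp := two_per hpe hPp he2
    have htake : p.take (p.length - e) = S (n+2) := by
      rw [show p.length - e = (S (n+2)).length by omega]
      exact (List.prefix_iff_eq_take.mp hSp).symm
    rw [htake] at htp
    have hpe2 : Per (S (n+2)) e := per_of_prefix hSp hpe
    rcases Nat.lt_or_ge e ((S n).length + 2) with hc | hc
    · exact S_no_small_per n e he1 hc hpe2
    · apply S_no_small_per n ((S (n+1)).length + 2 - e) (by omega) _ htp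
      have := S_len_lt2 n
      omega

lemma palClosure_eq_of (w : List Bool) (k : ℕ)
    (hpal : (w.drop k).reverse = w.drop k)
    (hmin : ∀ j, j < k → ¬ (w.drop j).reverse = w.drop j) :
    palClosure w = w ++ (w.take k).reverse := by
  unfold palClosure
  have hfind : Nat.find (p := fun k => (w.drop k).reverse = w.drop k) ⟨w.length, by simp⟩ = k :=
    (Nat.find_eq_iff _).mpr ⟨hpal, hmin⟩
  simp only [hfind, List.take_append_drop]

lemma no_mid_pal' (n : ℕ) (p : List Bool) (hp : p <+: S (n+2)) (hpal : p.reverse = p)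
    (hlen : (S (n+1)).length < p.length) : p = S (n+2) := by
  cases n with
  | succ n => exact no_mid_pal n p hp hpal hlen
  | zero =>
    norm_num at hp hlen ⊢
    have hle : p.length ≤ 3 := by
      have := hp.length_le
      simpa [S] using this
    have h1 : (S 1).length = 1 := by decide
    have heq : p = (S 2).take p.length := List.prefix_iff_eq_take.mp hp
    have h23 : p.length = 2 ∨ p.length = 3 := by omega
    rcases h23 with h2 | h2
    · rw [h2] at heq
      exfalso
      rw [heq] at hpal
      revert hpal
      decide
    · rw [h2] at heq
      rw [heq]
      decide

lemma key_min (n j : ℕ) (hj : j < (S (n+2)).length + 1)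
    (hu : ((S (n+3) ++ [xx (n+3)]).drop j).reverse = (S (n+3) ++ [xx (n+3)]).drop j) :
    False := by
  have hx3 : xx (n+3) = !xx (n+2) := xx_succ (n+2)
  have hlen3 : (S (n+3)).length = (S (n+1)).length + 2 + (S (n+2)).length := S_len (n+1)
  have hlen2 : (S (n+2)).length = (S n).length + 2 + (S (n+1)).length := S_len n
  have hlt1 : (S n).length < (S (n+1)).length := S_len_lt n
  have hlt2 : (S (n+1)).length < (S (n+2)).length := S_len_lt (n+1)
  have hwl : (S (n+3) ++ [xx (n+3)]).length = (S (n+3)).length + 1 := by simp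
  have hrevw : (S (n+3) ++ [xx (n+3)]).reverse = xx (n+3) :: S (n+3) := by
    simp [S_pal (n+3)]
  obtain ⟨d, hd⟩ : ∃ d, (S (n+3) ++ [xx (n+3)]).length - j = d + 2 :=
    ⟨(S (n+3) ++ [xx (n+3)]).length - j - 2, by omega⟩
  have hdlow : (S (n+1)).length + 1 ≤ d := by omega
  have hd3 : d < (S (n+3)).length := by omega
  have huu : (S (n+3) ++ [xx (n+3)]).drop j = (xx (n+3) :: S (n+3)).take (d + 2) := by
    conv_lhs => rw [← hu]
    rw [List.reverse_drop, hrevw, hd]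
  have htk : (xx (n+3) :: S (n+3)).take (d + 2) =
      xx (n+3) :: ((S (n+3)).take d ++ [(S (n+3))[d]'hd3]) := by
    rw [show d + 2 = (d + 1) + 1 by omega, List.take_succ_cons, List.take_succ,
      List.getElem?_eq_getElem hd3]
    rfl
  rw [huu, htk] at hu
  obtain ⟨c0, hc0⟩ : ∃ c0, (S (n+3))[d]'hd3 = c0 := ⟨_, rfl⟩
  obtain ⟨p', hp'⟩ : ∃ p', (S (n+3)).take d = p' := ⟨_, rfl⟩
  rw [hc0, hp'] at hu
  -- extract: head letter equals last letter, middle is palindrome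
  have hcc : c0 = xx (n+3) ∧ p'.reverse = p' := by
    have h0 : [c0] ++ (p'.reverse ++ [xx (n+3)]) = [xx (n+3)] ++ (p' ++ [c0]) := by
      have := hu
      simp only [List.reverse_cons, List.reverse_append, List.reverse_singleton] at this
      simpa using this
    have h1 : c0 = xx (n+3) := by
      have := congrArg (fun l => l[0]?) h0
      simpa using this
    refine ⟨h1, ?_⟩
    have h2 := congrArg List.tail h0
    simp only [List.singleton_append, List.tail_cons] at h2
    rw [h1] at h2
    exact List.append_cancel_right h2
  have hp'pal := hcc.2
  have hp'pre : p' <+: S (n+3) := hp' ▸ List.take_prefix _ _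
  have hp'len : p'.length = d := by
    rw [← hp', List.length_take]; omega
  have hple : p'.length ≤ (S (n+2)).length := by
    by_contra hgt
    have heq := no_mid_pal' (n+1) _ hp'pre hp'pal
      (by show (S (n+2)).length < p'.length; omega)
    have := congrArg List.length heq
    have hl3 : (S (n+1+2)).length = (S (n+3)).length := rfl
    omega
  have hp'pre2 : p' <+: S (n+2) :=
    List.prefix_of_prefix_length_le hp'pre (S_prefix (n+2) (n+3) (by omega)) (by omega)
  have hp'eq : p' = S (n+2) := no_mid_pal' n _ hp'pre2 hp'pal (by omega)
  have hdeq : d = (S (n+2)).length := by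
    have := congrArg List.length hp'eq
    omega
  have hlet : (S (n+3))[(S (n+2)).length]? = some (xx (n+2)) := S_letter (n+2)
  have hsome : (S (n+3))[d]? = some c0 := by
    rw [List.getElem?_eq_getElem hd3, hc0]
  have h5 : (S (n+3))[d]? = some (xx (n+2)) := by rw [hdeq]; exact hlet
  rw [hsome] at h5
  have hc0v : c0 = xx (n+2) := Option.some_injective _ h5
  rw [hcc.1, hx3] at hc0v
  simp at hc0v

lemma key (n : ℕ) :
    palClosure (S (n+3) ++ [xx (n+3)]) = S (n+3) ++ [xx (n+3), !xx (n+3)] ++ S (n+2) := by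
  have hx3 : xx (n+3) = !xx (n+2) := xx_succ (n+2)
  have hdecomp : S (n+3) ++ [xx (n+3)] =
      (S (n+2) ++ [xx (n+2)]) ++ ([xx (n+3)] ++ S (n+1) ++ [xx (n+3)]) := by
    rw [S_B (n+1), hx3]
    simp
  have hAlen : (S (n+2) ++ [xx (n+2)]).length = (S (n+2)).length + 1 := by simp
  have hpalk : (((S (n+3) ++ [xx (n+3)]).drop ((S (n+2)).length + 1)).reverse =
      (S (n+3) ++ [xx (n+3)]).drop ((S (n+2)).length + 1)) := by
    rw [hdecomp, ← hAlen, List.drop_left]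
    simp [List.reverse_append, S_pal (n+1)]
  have hres := palClosure_eq_of (S (n+3) ++ [xx (n+3)]) ((S (n+2)).length + 1) hpalk
    (fun j hj hu => absurd (key_min n j hj hu) not_false)
  rw [hres]
  have htakek : (S (n+3) ++ [xx (n+3)]).take ((S (n+2)).length + 1) = S (n+2) ++ [xx (n+2)] := by
    rw [hdecomp, ← hAlen, List.take_left]
  rw [htakek]
  simp [List.reverse_append, S_pal (n+2), hx3]

lemma key1 : palClosure (S 1 ++ [xx 1]) = S 1 ++ [xx 1, !xx 1] ++ S 0 := by
  have h := palClosure_eq_of (S 1 ++ [xx 1]) 1 (by decide) (by decide)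
  rw [h]; decide

lemma key2 : palClosure (S 2 ++ [xx 2]) = S 2 ++ [xx 2, !xx 2] ++ S 1 := by
  have h := palClosure_eq_of (S 2 ++ [xx 2]) 2 (by decide) (by decide)
  rw [h]; decide

lemma key0 : palClosure (S 0 ++ [xx 0]) = S 1 := by
  have h := palClosure_eq_of (S 0 ++ [xx 0]) 0 (by decide) (by decide)
  rw [h]; decide

lemma key_all (m : ℕ) : palClosure (S m ++ [xx m]) = S (m+1) := by
  match m with
  | 0 => exact key0
  | 1 => rw [key1]; rfl
  | 2 => rw [key2]; exact (S_B 1).symm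
  | (n+3) => rw [key n]; exact (S_B (n+2)).symm

lemma psi_snoc (v : List Bool) (c : Bool) : psi (v ++ [c]) = palClosure (psi v ++ [c]) := by
  simp [psi, List.foldl_append]

lemma vN_succ (n : ℕ) : vN (n+1) = vN n ++ [xx n] := by
  simp [vN, List.range_succ, xx]

lemma psi_vN (m : ℕ) : psi (vN m) = S m := by
  induction m with
  | zero => rfl
  | succ m ih => rw [vN_succ, psi_snoc, ih, key_all]

theorem stmt11 (n : ℕ) (hn : 2 ≤ n) (z : Bool)
    (hz : z = if n % 2 = 0 then false else true) :
    psi (vN (n + 1)) = psi (vN (n - 1)) ++ [!z, z] ++ psi (vN n) := by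
  have hzx : z = xx n := by
    rw [hz]
    rcases Nat.mod_two_eq_zero_or_one n with h | h <;> simp [xx, h]
  obtain ⟨m, rfl⟩ : ∃ m, n = m + 2 := ⟨n - 2, by omega⟩
  rw [psi_vN, psi_vN, psi_vN]
  show S (m+3) = S (m+1) ++ [!z, z] ++ S (m+2)
  rw [hzx]
  exact S_def (m+1)
end
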